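/- arXiv:2409.05667 — 2 statements merged into one kernel-verified Lean document; each statement's English description precedes it below -/
import Mathlib

section
/- If A is Poisson with mean r > 0 and m, m' are non-negative integers, then E[(A)_{m'} (A)_m] = Σ_{n=0}^{m} n! C(m,n) C(m',n) r^{m+m'-n}. -/
/-!
The factorial moments of a Poisson variable are `E[(A)_k] = r ^ k`: shifting the summation index
by `k` turns `(a)_k / a!` into `1 / (a - k)!`. Writing `a = b + m'`, Chu–Vandermonde for
`(b + m')_m` together with `(b + m')_{m'} (b)_i = (b + m')_{m' + i}` expresses the product as
`(a)_{m'} (a)_m = ∑ n! C(m,n) C(m',n) (a)_{m+m'-n}`, and linearity of expectation finishes.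
-/

/-- Falling factorial `(a)_k` as a real number. -/
def fall (a k : ℕ) : ℝ := (a.descFactorial k : ℝ)

/-- Poisson probability mass function with mean `r`. -/
noncomputable def poissonPMF (r : ℝ) (a : ℕ) : ℝ := Real.exp (-r) * r ^ a / (Nat.factorial a : ℝ)

open Finset
open scoped Nat

theorem Nat.add_descFactorial_eq_sum (b c k : ℕ) :
    (b + c).descFactorial k =
      ∑ ij ∈ antidiagonal k, k.choose ij.1 * (b.descFactorial ij.1 * c.descFactorial ij.2) := by
  have h := Ring.descPochhammer_smeval_add (R := ℤ) (r := b) (s := c) k (Commute.all _ _)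
  simp only [← Nat.cast_add, Polynomial.descPochhammer_smeval_eq_descFactorial] at h
  exact_mod_cast h

theorem Nat.add_descFactorial_mul_descFactorial (b k l : ℕ) :
    (b + k).descFactorial k * b.descFactorial l = (b + k).descFactorial (k + l) := by
  simpa [Nat.mul_comm] using Nat.descFactorial_mul_descFactorial (n := b + k) (k := k) (m := k + l)
    (Nat.le_add_right k l)

theorem Nat.descFactorial_mul_descFactorial_eq_sum (a m m' : ℕ) :
    a.descFactorial m' * a.descFactorial m =
      ∑ n ∈ range (m + 1), n ! * m.choose n * m'.choose n * a.descFactorial (m + m' - n) := by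
  rcases lt_or_ge a m' with ha | ha
  · rw [Nat.descFactorial_eq_zero_iff_lt.mpr ha, zero_mul, eq_comm]
    refine sum_eq_zero fun n hn => ?_
    have hnm : n ≤ m := Nat.lt_succ_iff.mp (mem_range.mp hn)
    rw [Nat.descFactorial_eq_zero_iff_lt.mpr (by omega), mul_zero]
  obtain ⟨b, rfl⟩ := Nat.exists_eq_add_of_le' ha
  rw [Nat.add_descFactorial_eq_sum b m' m, mul_sum, ← Nat.sum_antidiagonal_swap]
  simp only [Prod.fst_swap, Prod.snd_swap]
  rw [Nat.sum_antidiagonal_eq_sum_range_succ (fun j i =>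
    (b + m').descFactorial m' * (m.choose i * (b.descFactorial i * m'.descFactorial j))) m]
  refine sum_congr rfl fun n hn => ?_
  have hnm : n ≤ m := Nat.lt_succ_iff.mp (mem_range.mp hn)
  rw [Nat.choose_symm hnm, Nat.descFactorial_eq_factorial_mul_choose m' n,
    show m + m' - n = m' + (m - n) by omega, ← Nat.add_descFactorial_mul_descFactorial]
  ring

theorem hasSum_poissonPMF (r : ℝ) : HasSum (poissonPMF r) 1 := by
  have h := (NormedSpace.expSeries_div_hasSum_exp r).mul_left (Real.exp (-r))
  rw [← Real.exp_eq_exp_ℝ, ← Real.exp_add, neg_add_cancel, Real.exp_zero] at h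
  rwa [show poissonPMF r = fun a => Real.exp (-r) * (r ^ a / a !) from
    funext fun a => mul_div_assoc _ _ _]

theorem poissonPMF_add_mul_fall (r : ℝ) (a k : ℕ) :
    poissonPMF r (a + k) * fall (a + k) k = r ^ k * poissonPMF r a := by
  have hfac : ((a + k)! : ℝ) = a ! * (a + k).descFactorial k := by
    rw [← Nat.factorial_mul_ascFactorial, Nat.add_descFactorial_eq_ascFactorial, Nat.cast_mul]
  rw [poissonPMF, poissonPMF, fall, hfac, pow_add]
  field_simp

theorem hasSum_poissonPMF_mul_fall (r : ℝ) (k : ℕ) :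
    HasSum (fun a => poissonPMF r a * fall a k) (r ^ k) := by
  rw [← hasSum_nat_add_iff' k, sum_eq_zero fun a ha => ?_, sub_zero]
  · have h := (hasSum_poissonPMF r).mul_left (r ^ k)
    rw [mul_one] at h
    simpa only [poissonPMF_add_mul_fall] using h
  · rw [fall, Nat.descFactorial_eq_zero_iff_lt.mpr (mem_range.mp ha), Nat.cast_zero, mul_zero]

theorem poisson_expect_descFactorial_mul_general (r : ℝ) (m m' : ℕ) :
    ∑' a : ℕ, poissonPMF r a * (fall a m' * fall a m) =
      ∑ n ∈ Finset.range (m + 1),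
        (Nat.factorial n : ℝ) * (m.choose n : ℝ) * (m'.choose n : ℝ) * r ^ (m + m' - n) := by
  have hprod (a : ℕ) : fall a m' * fall a m =
      ∑ n ∈ range (m + 1), (n ! : ℝ) * m.choose n * m'.choose n * fall a (m + m' - n) := by
    simp only [fall]
    exact_mod_cast Nat.descFactorial_mul_descFactorial_eq_sum a m m'
  calc ∑' a : ℕ, poissonPMF r a * (fall a m' * fall a m)
      = ∑' a : ℕ, ∑ n ∈ range (m + 1),
          (n ! : ℝ) * m.choose n * m'.choose n * (poissonPMF r a * fall a (m + m' - n)) :=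
        tsum_congr fun a => by rw [hprod, mul_sum]; exact sum_congr rfl fun n _ => by ring
    _ = _ := (hasSum_sum fun n _ => (hasSum_poissonPMF_mul_fall r (m + m' - n)).mul_left
        ((n ! : ℝ) * m.choose n * m'.choose n)).tsum_eq

/-- For `A` Poisson with mean `r > 0`,
`E[(A)_{m'} (A)_m] = Σ_{n=0}^{m} n! C(m,n) C(m',n) r^{m+m'-n}`. -/
theorem poisson_expect_descFactorial_mul (r : ℝ) (hr : 0 < r) (m m' : ℕ) :
    ∑' a : ℕ, poissonPMF r a * (fall a m' * fall a m) =
      ∑ n ∈ Finset.range (m + 1),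
        (Nat.factorial n : ℝ) * (m.choose n : ℝ) * (m'.choose n : ℝ) * r ^ (m + m' - n) :=
  poisson_expect_descFactorial_mul_general r m m'
end

section
/- The polynomials ψ_n are eigenfunctions of the operator S defined by (S f)(a) = (γ_A/γ_B)(a·(f(a-1) - f(a)) + r·(f(a+1) - f(a))): for every n ≥ 0, (S ψ_n)(a) = -(n γ_A/γ_B) ψ_n(a) for all a ∈ ℤ_{≥0}. -/
/-- `ψ_n(a) = Σ_{k=0}^{n} C(n,k) (-r)^k (a)_{n-k}`. -/
def psi (r : ℝ) (n a : ℕ) : ℝ :=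
  ∑ k ∈ Finset.range (n + 1), (n.choose k : ℝ) * (-r) ^ k * fall a (n - k)

/-- The operator `(S f)(a) = (γ_A/γ_B)[a (f(a-1) - f(a)) + r (f(a+1) - f(a))]`;
at `a = 0` the coefficient `a` annihilates the `f(a-1)` term. -/
noncomputable def Sop (γA γB r : ℝ) (f : ℕ → ℝ) (a : ℕ) : ℝ :=
  (γA / γB) * ((a : ℝ) * (f (a - 1) - f a) + r * (f (a + 1) - f a))

open Finset

section BinomialSums

variable {R : Type*} [CommSemiring R]

theorem sum_range_choose_mul_tsub (n : ℕ) (g : ℕ → R) :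
    ∑ k ∈ range (n + 2), ((n + 1).choose k : R) * ((n + 1 - k : ℕ) : R) * g k =
      (n + 1) * ∑ k ∈ range (n + 1), (n.choose k : R) * g k := by
  rw [sum_range_succ, Nat.sub_self, Nat.cast_zero, mul_zero, zero_mul, add_zero, mul_sum]
  refine sum_congr rfl fun k _ => ?_
  rw [← mul_assoc]
  congr 1
  norm_cast
  exact congrArg _ ((Nat.choose_mul_succ_eq n k).symm.trans (mul_comm _ _))

theorem sum_range_choose_mul_self (n : ℕ) (g : ℕ → R) :
    ∑ k ∈ range (n + 2), ((n + 1).choose k : R) * k * g k =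
      (n + 1) * ∑ k ∈ range (n + 1), (n.choose k : R) * g (k + 1) := by
  rw [sum_range_succ', Nat.cast_zero, mul_zero, zero_mul, add_zero, mul_sum]
  refine sum_congr rfl fun k _ => ?_
  rw [← mul_assoc]
  congr 1
  norm_cast
  exact congrArg _ (Nat.add_one_mul_choose_eq n k).symm

end BinomialSums

theorem fall_eq_eval_descPochhammer (a k : ℕ) : fall a k = (descPochhammer ℝ k).eval (a : ℝ) :=
  (descPochhammer_eval_eq_descFactorial ℝ a k).symm

theorem fall_succ_right (a k : ℕ) : fall a (k + 1) = fall a k * (a - k) := by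
  simp only [fall_eq_eval_descPochhammer, descPochhammer_succ_eval]

theorem fall_succ_succ (a k : ℕ) : fall (a + 1) (k + 1) = (a + 1) * fall a k := by
  rw [fall, fall, Nat.succ_descFactorial_succ]
  push_cast
  rfl

theorem natCast_mul_fall_pred_sub (a k : ℕ) :
    (a : ℝ) * (fall (a - 1) k - fall a k) = -k * fall a k := by
  rcases a with _ | a
  · simpa [fall, Nat.descFactorial_eq_zero_iff_lt] using k.eq_zero_or_pos
  · rw [Nat.add_sub_cancel, mul_sub, Nat.cast_succ, ← fall_succ_succ, fall_succ_right]
    push_cast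
    ring

theorem fall_succ_sub (a k : ℕ) : fall (a + 1) k - fall a k = k * fall a (k - 1) := by
  rcases k with _ | k
  · simp [fall]
  · rw [fall_succ_succ, fall_succ_right, Nat.add_sub_cancel]
    push_cast
    ring

theorem psi_zero (r : ℝ) (a : ℕ) : psi r 0 a = 1 := by
  simp [psi, fall]

theorem psi_succ_sub (r : ℝ) (n a : ℕ) :
    psi r (n + 1) (a + 1) - psi r (n + 1) a = (n + 1) * psi r n a := by
  calc psi r (n + 1) (a + 1) - psi r (n + 1) a
      = ∑ k ∈ range (n + 2), ((n + 1).choose k : ℝ) * ((n + 1 - k : ℕ) : ℝ) *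
          ((-r) ^ k * fall a (n - k)) := by
        rw [psi, psi, ← sum_sub_distrib]
        refine sum_congr rfl fun k _ => ?_
        rw [← mul_sub, fall_succ_sub, show n + 1 - k - 1 = n - k by omega]
        ring
    _ = (n + 1) * psi r n a := by
        rw [sum_range_choose_mul_tsub, psi]
        simp only [mul_assoc]

theorem natCast_mul_psi_pred_sub (r : ℝ) (n a : ℕ) :
    (a : ℝ) * (psi r (n + 1) (a - 1) - psi r (n + 1) a) =
      -(n + 1) * (psi r (n + 1) a + r * psi r n a) := by
  have weighted : ∑ k ∈ range (n + 2), ((n + 1).choose k : ℝ) * k * ((-r) ^ k * fall a (n + 1 - k))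
      = -(n + 1) * r * psi r n a := by
    rw [sum_range_choose_mul_self, psi, mul_sum, mul_sum]
    refine sum_congr rfl fun k _ => ?_
    rw [show n + 1 - (k + 1) = n - k by omega]
    ring
  calc (a : ℝ) * (psi r (n + 1) (a - 1) - psi r (n + 1) a)
      = ∑ k ∈ range (n + 2), ((n + 1).choose k : ℝ) * k * ((-r) ^ k * fall a (n + 1 - k))
          - (n + 1) * psi r (n + 1) a := by
        rw [psi, psi, ← sum_sub_distrib, mul_sum, mul_sum, ← sum_sub_distrib]
        refine sum_congr rfl fun k hk => ?_
        have hkn : k ≤ n + 1 := Nat.lt_succ_iff.mp (mem_range.mp hk)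
        rw [← mul_sub, mul_left_comm, natCast_mul_fall_pred_sub, Nat.cast_sub hkn]
        push_cast
        ring
    _ = -(n + 1) * (psi r (n + 1) a + r * psi r n a) := by
        rw [weighted]
        ring

theorem psi_eigenfunction_general (γA γB r : ℝ)
    (n : ℕ) (a : ℕ) :
    Sop γA γB r (psi r n) a = -((n : ℝ) * γA / γB) * psi r n a := by
  rcases n with _ | n
  · simp [Sop, psi_zero]
  · rw [Sop, natCast_mul_psi_pred_sub, psi_succ_sub]
    push_cast
    ring

/-- The `ψ_n` are eigenfunctions of `S` with eigenvalues `-n γ_A/γ_B`. -/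
theorem psi_eigenfunction (γA γB r : ℝ) (hγA : 0 < γA) (hγB : 0 < γB) (hr : 0 < r)
    (n : ℕ) (a : ℕ) :
    Sop γA γB r (psi r n) a = -((n : ℝ) * γA / γB) * psi r n a :=
  psi_eigenfunction_general γA γB r n a
end
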